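/- Let G be a finite group and Ḡ a nontrivial finite abelian group with primary decomposition Ḡ = Z/p_1^{e_1} × ⋯ × Z/p_r^{e_r} (p_i primes, e_i ≥ 1), and let g ↦ ḡ be a surjective group homomorphism G → Ḡ. For 1 ≤ i ≤ r let s_i be a generator of the summand Z/p_i^{e_i} and fix σ_i ∈ G with σ̄_i = s_i. Let Z^G be the free abelian group on symbols t_g (g ∈ G), with homomorphism Z^G → Ḡ, t_g ↦ ḡ, and let Y be its kernel. For each g ∈ G write ḡ = s_1^{f_1(g)} ⋯ s_r^{f_r(g)} with 0 ≤ f_i(g) < p_i^{e_i}, and for g different from the identity e and from σ_1, …, σ_r set u_g = t_g · Π_{i : f_i(g) ≠ 0} t_{σ_i}^{p_i^{e_i} − f_i(g)} (written multiplicatively). Then the set consisting of t_e, t_{σ_1}^{p_1^{e_1}}, …, t_{σ_r}^{p_r^{e_r}}, together with the elements u_g, forms a basis of the free abelian group Y. -/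

import Mathlib

/-!
Write `S = {e, σ₁, …, σ_r}`. Each `u_g` (`g ∉ S`) lies in `Y` and agrees with `t_g` off `S`, so
restricting to the coordinates outside `S` is unitriangular on the `u_g`, and `Y` is the direct
sum of their span and `Y ∩ ℤ^S`. An element `a t_e + ∑ cᵢ t_{σᵢ}` of `ℤ^S` maps to
`(cᵢ mod pᵢ^{eᵢ})ᵢ`, so it lies in `Y` exactly when `pᵢ^{eᵢ} ∣ cᵢ` for all `i`; hence `t_e` and
the `t_{σᵢ}^{pᵢ^{eᵢ}}` form a basis of `Y ∩ ℤ^S`.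
-/

open TensorProduct

noncomputable section

/-- A submodule `S` of a coalgebra `C` is a subcoalgebra if `Δ(S) ⊆ S ⊗ S`. -/
def IsSubcoalg (k : Type*) [Field k] {C : Type*} [AddCommGroup C] [Module k C] [Coalgebra k C]
    (S : Submodule k C) : Prop :=
  ∀ x ∈ S, Coalgebra.comul (R := k) x ∈
    LinearMap.range (TensorProduct.map S.subtype S.subtype)

/-- A coalgebra is pointed if every simple subcoalgebra is one-dimensional. -/
def IsPointedCoalg (k C : Type*) [Field k] [AddCommGroup C] [Module k C] [Coalgebra k C] : Prop :=
  ∀ S : Submodule k C, IsSubcoalg k S → S ≠ ⊥ →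
    (∀ T : Submodule k C, IsSubcoalg k T → T < S → T = ⊥) →
    Module.finrank k S = 1

/-- A group-like element: `ε(g) = 1` and `Δ(g) = g ⊗ g`. -/
def IsGpLike (k : Type*) [Field k] {C : Type*} [AddCommGroup C] [Module k C] [Coalgebra k C]
    (g : C) : Prop :=
  Coalgebra.counit (R := k) g = 1 ∧ Coalgebra.comul (R := k) g = g ⊗ₜ[k] g

/-- Data exhibiting `A` as the free commutative Hopf algebra `S(t_C)_Θ` on a coalgebra `C`. -/
structure FreeCommHopfData (k : Type*) [Field k] (C : Type*) [AddCommGroup C] [Module k C]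
    [Coalgebra k C] (A : Type*) [CommRing A] [HopfAlgebra k A] where
  t : C →ₗ[k] A
  tinv : C →ₗ[k] A
  comul_t : ∀ x : C, Coalgebra.comul (R := k) (t x) = TensorProduct.map t t (Coalgebra.comul x)
  comul_tinv : ∀ x : C, Coalgebra.comul (R := k) (tinv x)
      = TensorProduct.map tinv tinv (TensorProduct.comm k C C (Coalgebra.comul (R := k) x))
  counit_t : ∀ x : C, Coalgebra.counit (R := k) (t x) = Coalgebra.counit (R := k) x
  counit_tinv : ∀ x : C, Coalgebra.counit (R := k) (tinv x) = Coalgebra.counit (R := k) x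
  mul_t_tinv : ∀ x : C, LinearMap.mul' k A (TensorProduct.map t tinv (Coalgebra.comul (R := k) x))
      = Coalgebra.counit (R := k) x • (1 : A)
  mul_tinv_t : ∀ x : C, LinearMap.mul' k A (TensorProduct.map tinv t (Coalgebra.comul (R := k) x))
      = Coalgebra.counit (R := k) x • (1 : A)
  antipode_t : ∀ x : C, HopfAlgebra.antipode (R := k) (t x) = tinv x
  antipode_tinv : ∀ x : C, HopfAlgebra.antipode (R := k) (tinv x) = t x
  injective_t : Function.Injective t
  isDomain : IsDomain A
  adjoin_eq_top : Algebra.adjoin k (Set.range t ∪ Set.range tinv) = ⊤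
  universal : ∀ {A' : Type*} [CommRing A'] [HopfAlgebra k A'] (f : C →ₗ[k] A'),
      (∀ x : C, Coalgebra.comul (R := k) (f x) = TensorProduct.map f f (Coalgebra.comul (R := k) x)) →
      (∀ x : C, Coalgebra.counit (R := k) (f x) = Coalgebra.counit (R := k) x) →
      ∃! φ : A →ₐc[k] A', ∀ x : C, φ (t x) = f x

/-- Data exhibiting `Hab` as the largest commutative Hopf algebra quotient of `H`. -/
structure HabData (k : Type*) [Field k] (H : Type*) [Ring H] [HopfAlgebra k H]
    (Hab : Type*) [CommRing Hab] [HopfAlgebra k Hab] where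
  q : H →ₐc[k] Hab
  surjective_q : Function.Surjective q
  universal : ∀ {B : Type*} [CommRing B] [HopfAlgebra k B] (f : H →ₐc[k] B),
      ∃! g : Hab →ₐc[k] B, ∀ x : H, g (q x) = f x

variable {k : Type*} [Field k]

section Generic

variable {H : Type*} [Ring H] [HopfAlgebra k H] {A : Type*} [CommRing A] [HopfAlgebra k A]

/-- σ(x,y) = t_{x₁} t_{y₁} t⁻¹_{x₂ y₂}. -/
def sigmaElem (F : FreeCommHopfData k H A) (x y : H) : A :=
  (LinearMap.mul' k A).comp
    ((TensorProduct.map (LinearMap.mul' k A) LinearMap.id).comp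
      ((TensorProduct.map (TensorProduct.map F.t F.t) (F.tinv.comp (LinearMap.mul' k H))).comp
        (TensorProduct.tensorTensorTensorComm k H H H H).toLinearMap))
    ((Coalgebra.comul (R := k) x) ⊗ₜ[k] (Coalgebra.comul (R := k) y))

/-- σ⁻¹(x,y) = t_{x₁ y₁} t⁻¹_{x₂} t⁻¹_{y₂}. -/
def sigmaInvElem (F : FreeCommHopfData k H A) (x y : H) : A :=
  (LinearMap.mul' k A).comp
    ((TensorProduct.map LinearMap.id (LinearMap.mul' k A)).comp
      ((TensorProduct.map (F.t.comp (LinearMap.mul' k H)) (TensorProduct.map F.tinv F.tinv)).comp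
        (TensorProduct.tensorTensorTensorComm k H H H H).toLinearMap))
    ((Coalgebra.comul (R := k) x) ⊗ₜ[k] (Coalgebra.comul (R := k) y))

/-- The generic base algebra B_H. -/
def genericBase (F : FreeCommHopfData k H A) : Subalgebra k A :=
  Algebra.adjoin k ({a | ∃ x y : H, a = sigmaElem F x y} ∪ {a | ∃ x y : H, a = sigmaInvElem F x y})

/-- The coaction δ_S = (id ⊗ q̃) ∘ Δ of H_ab on S(t_H)_Θ, as an algebra map. -/
def coactS {Hab : Type*} [CommRing Hab] [HopfAlgebra k Hab] (qt : A →ₐc[k] Hab) :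
    A →ₐ[k] A ⊗[k] Hab :=
  (Algebra.TensorProduct.map (AlgHom.id k A) (qt : A →ₐ[k] Hab)).comp (Bialgebra.comulAlgHom k A)

/-- The subalgebra C_H of right H_ab-coinvariants of S(t_H)_Θ. -/
def coinvCH {Hab : Type*} [CommRing Hab] [HopfAlgebra k Hab] (qt : A →ₐc[k] Hab) :
    Subalgebra k A :=
  AlgHom.equalizer (coactS qt) Algebra.TensorProduct.includeLeft

end Generic

/-- `B` is a localization of `A` (inside an ambient commutative ring `R`): `A ⊆ B`, and `B` is
obtained from `A` by inverting a multiplicative subset of `A`. -/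
def IsLocalizationOfSet {R : Type*} [CommRing R] (A B : Set R) : Prop :=
  A ⊆ B ∧ ∃ M : Submonoid R, (M : Set R) ⊆ A ∧ (∀ m ∈ M, ∃ b ∈ B, m * b = 1) ∧
    ∀ b ∈ B, ∃ m ∈ M, b * m ∈ A


section PI

variable {H : Type*} [Ring H] [HopfAlgebra k H] {A : Type*} [CommRing A] [HopfAlgebra k A]

/-- The coaction δ_T of H on the tensor algebra T(X_H), with δ_T(X_x) = X_{x₁} ⊗ x₂. -/
def coactT (k : Type*) [Field k] (H : Type*) [Ring H] [HopfAlgebra k H] :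
    TensorAlgebra k H →ₐ[k] TensorAlgebra k H ⊗[k] H :=
  TensorAlgebra.lift k
    ((TensorProduct.map (TensorAlgebra.ι k) LinearMap.id).comp
      (Coalgebra.comul (R := k) (A := H)))

/-- The universal comodule algebra map μ : T(X_H) → S(t_H) ⊗ H, μ(X_x) = t_{x₁} ⊗ x₂. -/
def muMap (F : FreeCommHopfData k H A) : TensorAlgebra k H →ₐ[k] A ⊗[k] H :=
  TensorAlgebra.lift k
    ((TensorProduct.map F.t LinearMap.id).comp (Coalgebra.comul (R := k) (A := H)))

/-- p_x = t_{x₁} t_{S(x₂)}, as a linear function of x. -/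
def pMap (F : FreeCommHopfData k H A) : H →ₗ[k] A :=
  (LinearMap.mul' k A).comp
    ((TensorProduct.map F.t (F.t.comp (HopfAlgebra.antipode (R := k)))).comp
      (Coalgebra.comul (R := k)))

/-- q_{x,y} = t_{x₁} t_{y₁} t_{S(x₂ y₂)}, as a linear function of x ⊗ y. -/
def qMap (F : FreeCommHopfData k H A) : H ⊗[k] H →ₗ[k] A :=
  ((LinearMap.mul' k A).comp
    ((TensorProduct.map (LinearMap.mul' k A) LinearMap.id).comp
      ((TensorProduct.map (TensorProduct.map F.t F.t)
          ((F.t.comp ((HopfAlgebra.antipode (R := k)).comp (LinearMap.mul' k H))))).comp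
        (TensorProduct.tensorTensorTensorComm k H H H H).toLinearMap))).comp
    (TensorProduct.map (Coalgebra.comul (R := k)) (Coalgebra.comul (R := k)))

/-- P_x = X_{x₁} X_{S(x₂)} in the tensor algebra. -/
def PElem (k : Type*) [Field k] {H : Type*} [Ring H] [HopfAlgebra k H] (x : H) :
    TensorAlgebra k H :=
  (LinearMap.mul' k (TensorAlgebra k H))
    ((TensorProduct.map (TensorAlgebra.ι k)
      ((TensorAlgebra.ι k).comp (HopfAlgebra.antipode (R := k)))) (Coalgebra.comul (R := k) x))

/-- Q_{x,y} = X_{x₁} X_{y₁} X_{S(x₂ y₂)} in the tensor algebra. -/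
def QElem (k : Type*) [Field k] {H : Type*} [Ring H] [HopfAlgebra k H] (x y : H) :
    TensorAlgebra k H :=
  (LinearMap.mul' k (TensorAlgebra k H))
    ((TensorProduct.map (LinearMap.mul' k (TensorAlgebra k H)) LinearMap.id)
      ((TensorProduct.map (TensorProduct.map (TensorAlgebra.ι k) (TensorAlgebra.ι k))
          ((TensorAlgebra.ι k).comp ((HopfAlgebra.antipode (R := k)).comp (LinearMap.mul' k H))))
        ((TensorProduct.tensorTensorTensorComm k H H H H)
          ((Coalgebra.comul (R := k) x) ⊗ₜ[k] (Coalgebra.comul (R := k) y)))))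

/-- μ̄(V_H): the image in S(t_H) ⊆ A of the coinvariants of the universal comodule algebra. -/
def VHSet (F : FreeCommHopfData k H A) : Set A :=
  {a : A | ∃ u : TensorAlgebra k H, muMap F u = a ⊗ₜ[k] 1}

/-- `a` is a monomial of degree ≤ m (and ≥ 1) in the t-variables. -/
def IsTMonomialLe (F : FreeCommHopfData k H A) (m : ℕ) (a : A) : Prop :=
  ∃ d : ℕ, 1 ≤ d ∧ d ≤ m ∧ ∃ f : Fin d → H, a = ∏ j, F.t (f j)

/-- `a` is a monomial of degree ≤ m in the variables t_g, g group-like. -/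
def IsTGpMonomialLe (F : FreeCommHopfData k H A) (m : ℕ) (a : A) : Prop :=
  ∃ d : ℕ, 1 ≤ d ∧ d ≤ m ∧ ∃ f : Fin d → H, (∀ j, IsGpLike k (f j)) ∧ a = ∏ j, F.t (f j)

end PI

/-- Data exhibiting `H` as the Hopf algebra O_k(G) of k-valued functions on a finite group `G`. -/
structure FunAlgData (k : Type*) [Field k] (G : Type*) [Group G] [Fintype G] [DecidableEq G]
    (H : Type*) [CommRing H] [HopfAlgebra k H] where
  e : Module.Basis G k H
  mul_e : ∀ g h : G, e g * e h = if g = h then e g else 0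
  sum_e : ∑ g : G, e g = 1
  comul_e : ∀ g : G, Coalgebra.comul (R := k) (e g) = ∑ h : G, e (g * h⁻¹) ⊗ₜ[k] e h
  counit_e : ∀ g : G, Coalgebra.counit (R := k) (e g) = if g = 1 then (1 : k) else 0
  antipode_e : ∀ g : G, HopfAlgebra.antipode (R := k) (e g) = e g⁻¹

open Finsupp Submodule

namespace Finsupp

variable {α R M : Type*} [Ring R] [AddCommGroup M] [Module R M]

theorem ker_lcomapDomain_subtypeVal (p : α → Prop) :
    LinearMap.ker (lcomapDomain (M := M) (R := R) (Subtype.val : Subtype p → α)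
      Subtype.val_injective) = supported M R {x | ¬ p x} := by
  ext f
  simp [Finsupp.ext_iff, mem_supported, Set.subset_def, lcomapDomain, comapDomain_apply,
    not_imp_not]

theorem linearIndependent_single_of_injective [IsDomain R] {ι : Type*} {c : ι → α}
    (hc : Function.Injective c) {a : ι → R} (ha : ∀ i, a i ≠ 0) :
    LinearIndependent R fun i => single (c i) (a i) := by
  have := (linearIndependent_single_of_ne_zero ha).map' (lmapDomain R R c)
    (LinearMap.ker_eq_bot_of_injective (mapDomain_injective hc))
  simpa [Function.comp_def] using this

section Unitriangular

variable {κ : Type*} {p : α → Prop} {b : κ → α →₀ R} {u : Subtype p → α →₀ R}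

theorem lcomapDomain_subtypeVal_comp_eq_single
    (hu : ∀ g, u g - single g.1 1 ∈ supported R R {x | ¬ p x}) :
    lcomapDomain (M := R) (R := R) Subtype.val Subtype.val_injective ∘ u =
      fun g => single g 1 := by
  funext g
  have hg := hu g
  rw [← ker_lcomapDomain_subtypeVal, LinearMap.mem_ker, map_sub, sub_eq_zero] at hg
  rw [Function.comp_apply, hg]
  ext x
  simp [lcomapDomain]

theorem linearIndependent_sum_elim_of_sub_single_mem_supported (hb : LinearIndependent R b)
    (hbS : ∀ k, b k ∈ supported R R {x | ¬ p x})
    (hu : ∀ g, u g - single g.1 1 ∈ supported R R {x | ¬ p x}) :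
    LinearIndependent R (Sum.elim b u) := by
  set P := lcomapDomain (M := R) (R := R) (Subtype.val : Subtype p → α) Subtype.val_injective
  have hPu : LinearIndependent R (P ∘ u) := by
    rw [lcomapDomain_subtypeVal_comp_eq_single hu]
    exact linearIndependent_single_one R (Subtype p)
  have hbP : span R (Set.range b) ≤ LinearMap.ker P := by
    rw [ker_lcomapDomain_subtypeVal, span_le]
    exact Set.range_subset_iff.2 hbS
  exact hb.sum_type (LinearIndependent.of_comp P hPu) ((range_ker_disjoint hPu).symm.mono_left hbP)

theorem span_sum_elim_eq_of_sub_single_mem_supported {N : Submodule R (α →₀ R)}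
    (hb : span R (Set.range b) = N ⊓ supported R R {x | ¬ p x}) (huN : ∀ g, u g ∈ N)
    (hu : ∀ g, u g - single g.1 1 ∈ supported R R {x | ¬ p x}) :
    span R (Set.range (Sum.elim b u)) = N := by
  set P := lcomapDomain (M := R) (R := R) (Subtype.val : Subtype p → α) Subtype.val_injective
  have huN' : span R (Set.range u) ≤ N := span_le.2 (Set.range_subset_iff.2 huN)
  refine le_antisymm ?_ fun x hx => ?_
  · rw [Set.Sum.elim_range, span_union]
    exact sup_le (hb ▸ inf_le_left) huN'
  have hw : linearCombination R u (P x) ∈ span R (Set.range u) := by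
    rw [← range_linearCombination]
    exact LinearMap.mem_range_self _ _
  have hxw : x - linearCombination R u (P x) ∈ span R (Set.range b) := by
    rw [hb, ← ker_lcomapDomain_subtypeVal]
    refine ⟨sub_mem hx (huN' hw), ?_⟩
    rw [SetLike.mem_coe, LinearMap.mem_ker, map_sub, apply_linearCombination,
      lcomapDomain_subtypeVal_comp_eq_single hu, sub_eq_zero]
    simp [linearCombination_apply, P]
  rw [← sub_add_cancel x (linearCombination R u (P x)), Set.Sum.elim_range, span_union]
  exact add_mem_sup hxw hw

end Unitriangular

end Finsupp

theorem ZMod.sum_filter_val_ne_zero_smul_single {ι : Type*} [Fintype ι] [DecidableEq ι]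
    {n : ι → ℕ} [∀ i, NeZero (n i)] (x : ∀ i, ZMod (n i)) :
    ∑ i ∈ Finset.univ.filter (fun i => (x i).val ≠ 0),
      ((n i : ℤ) - (x i).val) • Pi.single i (1 : ZMod (n i)) = -x := by
  have hterm : ∀ i, ((n i : ℤ) - (x i).val) • Pi.single i (1 : ZMod (n i)) =
      Pi.single (M := fun i => ZMod (n i)) i (-x i) := by
    intro i
    rw [← Pi.single_smul, zsmul_one, Int.cast_sub, Int.cast_natCast, Int.cast_natCast,
      ZMod.natCast_self, ZMod.natCast_zmod_val, zero_sub]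
  simp_rw [hterm]
  rw [Finset.sum_filter_of_ne]
  · exact Finset.univ_sum_single (-x)
  intro i _ hi hx
  exact hi (by rw [(ZMod.val_eq_zero _).1 hx, neg_zero, Pi.single_zero])

section PiSingle

variable {G ι : Type*} [DecidableEq ι] {M : ι → Type*} [∀ i, MulZeroOneClass (M i)]
  [∀ i, Nontrivial (M i)] {π : G → ∀ i, M i} {σ : ι → G}

theorem injective_of_apply_eq_single (hσ : ∀ i, π (σ i) = Pi.single i 1) :
    Function.Injective σ := by
  intro i j hij
  by_contra hne
  have := congrFun (hσ i) i
  rw [hij, hσ j, Pi.single_eq_same, Pi.single_eq_of_ne hne] at this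
  exact one_ne_zero this.symm

theorem notMem_range_of_apply_eq_zero {o : G} (ho : π o = 0)
    (hσ : ∀ i, π (σ i) = Pi.single i 1) : o ∉ Set.range σ := by
  rintro ⟨i, rfl⟩
  have := congrFun (hσ i) i
  rw [ho, Pi.single_eq_same] at this
  exact zero_ne_one this

end PiSingle

section Kernel

variable {G ι : Type*} {n : ι → ℕ} {π : G → ∀ i, ZMod (n i)} {σ : ι → G}

theorem linearCombination_sum_smul_single [Fintype ι] [DecidableEq ι]
    (hσ : ∀ i, π (σ i) = Pi.single i 1) (c : ι → ℤ) :
    linearCombination ℤ π (∑ i, c i • single (σ i) 1) = fun i => (c i : ZMod (n i)) := by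
  simp only [map_sum, map_smul, linearCombination_single, one_smul, hσ, ← Pi.single_smul,
    zsmul_one]
  exact Finset.univ_sum_single _

theorem span_range_sum_elim_single_eq_ker_inf_supported [Fintype ι] [DecidableEq ι] {o : G}
    (ho : π o = 0) (hσ : ∀ i, π (σ i) = Pi.single i 1) :
    span ℤ (Set.range (Sum.elim (fun _ : Unit => single o (1 : ℤ))
        fun i => single (σ i) (n i : ℤ))) =
      LinearMap.ker (linearCombination ℤ π) ⊓ supported ℤ ℤ (insert o (Set.range σ)) := by
  refine le_antisymm (span_le.2 ?_) ?_
  · rintro - ⟨_ | i, rfl⟩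
    · exact ⟨by simp [ho], single_mem_supported ℤ _ (Set.mem_insert o _)⟩
    · refine ⟨?_, single_mem_supported ℤ _ (Set.mem_insert_of_mem o ⟨i, rfl⟩)⟩
      simp [hσ, ← Pi.single_smul]
  rintro x ⟨hker, hx⟩
  rw [SetLike.mem_coe, supported_eq_span_single, Set.image_insert_eq, ← Set.range_comp,
    mem_span_insert] at hx
  obtain ⟨a, z, hz, rfl⟩ := hx
  obtain ⟨c, rfl⟩ := (mem_span_range_iff_exists_fun ℤ).1 hz
  have hdvd : ∀ i, (n i : ℤ) ∣ c i := by
    intro i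
    have := congrFun (LinearMap.mem_ker.1 hker) i
    simp only [map_add, map_smul, linearCombination_single, ho, smul_zero, zero_add,
      Function.comp_def, linearCombination_sum_smul_single hσ, Pi.zero_apply] at this
    exact (ZMod.intCast_zmod_eq_zero_iff_dvd _ _).1 this
  choose d hd using hdvd
  refine add_mem (smul_mem _ a (subset_span ⟨Sum.inl (), rfl⟩)) (sum_mem fun i _ => ?_)
  rw [Function.comp_apply, hd, mul_comm, mul_smul, smul_single_one]
  exact smul_mem _ _ (subset_span ⟨Sum.inr i, rfl⟩)

theorem linearIndependent_sum_elim_single {o : G} (ho : o ∉ Set.range σ)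
    (hσ : Function.Injective σ) (hn : ∀ i, n i ≠ 0) :
    LinearIndependent ℤ (Sum.elim (fun _ : Unit => single o (1 : ℤ))
      fun i => single (σ i) (n i : ℤ)) := by
  have hb : (Sum.elim (fun _ : Unit => single o (1 : ℤ)) fun i => single (σ i) (n i : ℤ)) =
      fun j => single (Sum.elim (fun _ : Unit => o) σ j)
        (Sum.elim (fun _ => 1) (fun i => (n i : ℤ)) j) := by
    funext j
    cases j <;> rfl
  rw [hb]
  refine linearIndependent_single_of_injective ?_ ?_
  · exact (Function.injective_of_subsingleton _).sumElim hσ fun _ i h => ho ⟨i, h.symm⟩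
  · rintro (_ | i)
    exacts [one_ne_zero, Int.natCast_ne_zero.2 (hn i)]

variable (π σ) in
/-- The element `u_g` of the paper, with `fᵢ(g) = (π g i).val`. -/
def correctedSingle [Fintype ι] (g : G) : G →₀ ℤ :=
  single g 1 + ∑ i ∈ Finset.univ.filter (fun i => (π g i).val ≠ 0),
    single (σ i) ((n i : ℤ) - (π g i).val)

theorem correctedSingle_mem_ker [Fintype ι] [DecidableEq ι] [∀ i, NeZero (n i)]
    (hσ : ∀ i, π (σ i) = Pi.single i 1) (g : G) :
    correctedSingle π σ g ∈ LinearMap.ker (linearCombination ℤ π) := by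
  simp only [correctedSingle, LinearMap.mem_ker, map_add, map_sum, linearCombination_single, hσ,
    one_smul, ZMod.sum_filter_val_ne_zero_smul_single, add_neg_cancel]

theorem correctedSingle_sub_single_mem_supported [Fintype ι] (g : G) :
    correctedSingle π σ g - single g 1 ∈ supported ℤ ℤ (Set.range σ) := by
  rw [correctedSingle, add_sub_cancel_left]
  exact sum_mem fun i _ => single_mem_supported ℤ _ ⟨i, rfl⟩

end Kernel

theorem stmt_12 (G : Type*) [Group G]
    (r : ℕ) (p e : Fin r → ℕ) (hp : ∀ i, (p i).Prime) (he : ∀ i, 1 ≤ e i)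
    (π : G → ∀ i : Fin r, ZMod (p i ^ e i))
    (hπ1 : π 1 = 0)
    (σ : Fin r → G) (hσ : ∀ i, π (σ i) = Pi.single i 1) :
    LinearIndependent ℤ
      (fun j : Unit ⊕ Fin r ⊕ {g : G // g ≠ 1 ∧ ∀ i, g ≠ σ i} =>
        (match j with
          | Sum.inl _ => Finsupp.single (1 : G) (1 : ℤ)
          | Sum.inr (Sum.inl i) => Finsupp.single (σ i) ((p i ^ e i : ℕ) : ℤ)
          | Sum.inr (Sum.inr g) =>
              Finsupp.single g.1 (1 : ℤ) +
                ∑ i ∈ Finset.univ.filter (fun i : Fin r => ((π g.1) i).val ≠ 0),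
                  Finsupp.single (σ i)
                    (((p i ^ e i : ℕ) : ℤ) - (((π g.1) i).val : ℤ)) : G →₀ ℤ)) ∧
    Submodule.span ℤ
      (Set.range (fun j : Unit ⊕ Fin r ⊕ {g : G // g ≠ 1 ∧ ∀ i, g ≠ σ i} =>
        (match j with
          | Sum.inl _ => Finsupp.single (1 : G) (1 : ℤ)
          | Sum.inr (Sum.inl i) => Finsupp.single (σ i) ((p i ^ e i : ℕ) : ℤ)
          | Sum.inr (Sum.inr g) =>
              Finsupp.single g.1 (1 : ℤ) +
                ∑ i ∈ Finset.univ.filter (fun i : Fin r => ((π g.1) i).val ≠ 0),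
                  Finsupp.single (σ i)
                    (((p i ^ e i : ℕ) : ℤ) - (((π g.1) i).val : ℤ)) : G →₀ ℤ))) =
      LinearMap.ker (Finsupp.lsum ℤ
        (fun g : G => LinearMap.toSpanSingleton ℤ (∀ i : Fin r, ZMod (p i ^ e i)) (π g))) := by
  have : ∀ i, Fact (1 < p i ^ e i) := fun i =>
    ⟨Nat.one_lt_pow (Nat.one_le_iff_ne_zero.1 (he i)) (hp i).one_lt⟩
  have hS : {g : G | ¬(g ≠ 1 ∧ ∀ i, g ≠ σ i)} = insert 1 (Set.range σ) := by
    ext g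
    simp [or_iff_not_imp_left, eq_comm]
  have hΦ : Finsupp.lsum ℤ (fun g : G => LinearMap.toSpanSingleton ℤ
      (∀ i : Fin r, ZMod (p i ^ e i)) (π g)) = linearCombination ℤ π := by
    ext
    simp
  have hb := span_range_sum_elim_single_eq_ker_inf_supported (n := fun i => p i ^ e i) hπ1 hσ
  have hu (g : {g : G // g ≠ 1 ∧ ∀ i, g ≠ σ i}) := supported_mono (Set.subset_insert 1 _)
    (correctedSingle_sub_single_mem_supported (π := π) (σ := σ) g.1)
  rw [← hS] at hb hu
  have hli := linearIndependent_sum_elim_of_sub_single_mem_supported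
    (linearIndependent_sum_elim_single (notMem_range_of_apply_eq_zero hπ1 hσ)
      (injective_of_apply_eq_single hσ) fun i => NeZero.ne _)
    (fun k => (hb.le (subset_span ⟨k, rfl⟩)).2) hu
  have hspan := span_sum_elim_eq_of_sub_single_mem_supported hb
    (fun g => correctedSingle_mem_ker hσ g.1) hu
  rw [hΦ]
  refine (fun hfam => ⟨(linearIndependent_equiv' (Equiv.sumAssoc _ _ _) hfam).1 hli,
    by rw [← (Equiv.sumAssoc _ _ _).surjective.range_comp, hfam, hspan]⟩) ?_
  funext j
  rcases j with (_ | i) | g <;> rfl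
end
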